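/- Let m, k be integers with m ≥ 5 and 2 ≤ k ≤ ⌊(m-1)/2⌋. Then for every integer i with 1 ≤ i ≤ m, 3^{m-1} + Ψ_k(i, m) - Σ_{j=0}^{k} 2^j·C(m, j) > 0. -/

import Mathlib

open Finset

/-- The ternary Krawtchouk polynomial
`K_t(i,m) = Σ_{j=0}^{t} (-1)^j·2^{t-j}·C(i,j)·C(m-i,t-j)`. -/
def kraw (t i m : ℕ) : ℤ :=
  ∑ j ∈ Finset.range (t + 1),
    (-1 : ℤ) ^ j * 2 ^ (t - j) * (i.choose j : ℤ) * ((m - i).choose (t - j) : ℤ)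

/-- The Lloyd polynomial `Ψ_k(i,m) = Σ_{t=0}^{k} K_t(i,m)`. -/
def lloyd (k i m : ℕ) : ℤ := ∑ t ∈ Finset.range (k + 1), kraw t i m

/-!
Each Krawtchouk value is an alternating Vandermonde sum, so `|K_t(i, m)| ≤ 2^t C(m, t)` and hence
`|Ψ_k(i, m)| ≤ V(m, k) := Σ_{j ≤ k} 2^j C(m, j)`, the volume of a ternary Hamming ball of radius `k`.
It therefore suffices that `6 V(m, k) < 3^m`. Since `2k < m`, Pascal's rule and unimodality of the
binomial coefficients give `V(m + 1, k) ≤ 2 V(m, k)`, so this inequality propagates from `m` to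
`m + 1`. At `m = 2k + 1` it holds for `k ≥ 6` because `V(2k + 1, k) ≤ 2^k 4^k = 8^k`, and for
`2 ≤ k ≤ 5` it is checked at the first `m` where it is true. It fails only for
`(m, k) = (5, 2), (7, 3)`, where the Lloyd values are computed directly.
-/

def ternaryBallVol (m k : ℕ) : ℕ := ∑ j ∈ range (k + 1), 2 ^ j * m.choose j

lemma sum_range_choose_mul_choose_sub {i m : ℕ} (t : ℕ) (him : i ≤ m) :
    ∑ j ∈ range (t + 1), i.choose j * (m - i).choose (t - j) = m.choose t := by
  rw [← Nat.add_sub_cancel' him, Nat.add_choose_eq, Nat.sum_antidiagonal_eq_sum_range_succ_mk,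
    Nat.add_sub_cancel_left]

lemma abs_kraw_le {i m : ℕ} (t : ℕ) (him : i ≤ m) : |kraw t i m| ≤ 2 ^ t * (m.choose t : ℤ) := by
  calc |kraw t i m|
      ≤ ∑ j ∈ range (t + 1), |(-1 : ℤ) ^ j * 2 ^ (t - j) * i.choose j * (m - i).choose (t - j)| :=
        abs_sum_le_sum_abs _ _
    _ ≤ ∑ j ∈ range (t + 1), 2 ^ t * ((i.choose j : ℤ) * (m - i).choose (t - j)) := by
        gcongr with j
        rw [abs_mul, abs_mul, abs_mul, abs_pow, abs_neg, abs_one, one_pow, one_mul,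
          Nat.abs_cast, Nat.abs_cast, abs_pow, abs_two, mul_assoc]
        gcongr
        · norm_num
        · exact Nat.sub_le t j
    _ = 2 ^ t * (m.choose t : ℤ) := by
        rw [← mul_sum, ← sum_range_choose_mul_choose_sub t him]
        push_cast
        rfl

lemma abs_lloyd_le {i m : ℕ} (k : ℕ) (him : i ≤ m) : |lloyd k i m| ≤ ternaryBallVol m k := by
  calc |lloyd k i m| ≤ ∑ t ∈ range (k + 1), |kraw t i m| := abs_sum_le_sum_abs _ _
    _ ≤ ∑ t ∈ range (k + 1), 2 ^ t * (m.choose t : ℤ) := sum_le_sum fun t _ => abs_kraw_le t him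
    _ = ternaryBallVol m k := by simp [ternaryBallVol]

lemma ternaryBallVol_succ_le {m k : ℕ} (hkm : 2 * k < m) :
    ternaryBallVol (m + 1) k ≤ 2 * ternaryBallVol m k := by
  rw [ternaryBallVol, ternaryBallVol, mul_sum]
  refine sum_le_sum fun j hj => ?_
  obtain _ | s := j
  · simp
  · have hmono : m.choose s ≤ m.choose (s + 1) :=
      Nat.choose_le_succ_of_lt_half_left (by rw [mem_range] at hj; omega)
    calc 2 ^ (s + 1) * (m + 1).choose (s + 1)
        = 2 ^ (s + 1) * (m.choose s + m.choose (s + 1)) := by rw [Nat.choose_succ_succ]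
      _ ≤ 2 ^ (s + 1) * (2 * m.choose (s + 1)) := by gcongr; omega
      _ = 2 * (2 ^ (s + 1) * m.choose (s + 1)) := by ring

lemma six_mul_ternaryBallVol_lt_of_le {k m₀ m : ℕ} (hk : 2 * k < m₀) (hm : m₀ ≤ m)
    (h₀ : 6 * ternaryBallVol m₀ k < 3 ^ m₀) : 6 * ternaryBallVol m k < 3 ^ m := by
  induction m, hm using Nat.le_induction with
  | base => exact h₀
  | succ n hn ih =>
    have := ternaryBallVol_succ_le (hk.trans_le hn)
    rw [pow_succ]
    omega

lemma ternaryBallVol_halfway_le (k : ℕ) : ternaryBallVol (2 * k + 1) k ≤ 8 ^ k :=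
  calc ∑ j ∈ range (k + 1), 2 ^ j * (2 * k + 1).choose j
      ≤ ∑ j ∈ range (k + 1), 2 ^ k * (2 * k + 1).choose j := by
        gcongr with j hj
        · norm_num
        · exact Nat.lt_succ_iff.mp (mem_range.mp hj)
    _ = 8 ^ k := by rw [← mul_sum, Nat.sum_range_choose_halfway, ← mul_pow]; norm_num

lemma two_mul_eight_pow_lt_nine_pow {k : ℕ} (hk : 6 ≤ k) : 2 * 8 ^ k < 9 ^ k := by
  induction k, hk using Nat.le_induction with
  | base => norm_num
  | succ n _ ih => rw [pow_succ, pow_succ]; omega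

lemma six_mul_ternaryBallVol_lt {m k : ℕ} (hk : 2 ≤ k) (hkm : 2 * k < m)
    (hgen : 4 ≤ k ∨ 2 * k + 1 < m) : 6 * ternaryBallVol m k < 3 ^ m := by
  rcases Nat.lt_or_ge k 6 with hk6 | hk6
  · interval_cases k
    · exact six_mul_ternaryBallVol_lt_of_le (m₀ := 6) (by norm_num) (by omega) (by decide)
    · exact six_mul_ternaryBallVol_lt_of_le (m₀ := 8) (by norm_num) (by omega) (by decide)
    · exact six_mul_ternaryBallVol_lt_of_le (m₀ := 9) (by norm_num) (by omega) (by decide)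
    · exact six_mul_ternaryBallVol_lt_of_le (m₀ := 11) (by norm_num) (by omega) (by decide)
  · refine six_mul_ternaryBallVol_lt_of_le (m₀ := 2 * k + 1) (by omega) hkm ?_
    have h8 := ternaryBallVol_halfway_le k
    have h9 := two_mul_eight_pow_lt_nine_pow hk6
    rw [pow_succ, pow_mul]
    norm_num
    omega

theorem stmt_19 (m k : ℕ) (hk2 : 2 ≤ k) (hk : k ≤ (m - 1) / 2)
    (i : ℕ) (him : i ≤ m) :
    0 < (3 : ℤ) ^ (m - 1) + lloyd k i m
        - ∑ j ∈ Finset.range (k + 1), 2 ^ j * (m.choose j : ℤ) := by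
  obtain ⟨rfl, rfl⟩ | ⟨rfl, rfl⟩ | hgen :
      (m = 5 ∧ k = 2) ∨ (m = 7 ∧ k = 3) ∨ (4 ≤ k ∨ 2 * k + 1 < m) := by omega
  · interval_cases i <;> decide
  · interval_cases i <;> decide
  have hvol : (6 * ternaryBallVol m k : ℤ) < 3 ^ m :=
    mod_cast six_mul_ternaryBallVol_lt hk2 (by omega) hgen
  have hpow : (3 : ℤ) ^ m = 3 * 3 ^ (m - 1) := by rw [← pow_succ']; congr 1; omega
  have hsum : ∑ j ∈ range (k + 1), 2 ^ j * (m.choose j : ℤ) = ternaryBallVol m k := by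
    simp [ternaryBallVol]
  rw [hsum]
  linarith [(abs_le.mp (abs_lloyd_le k him)).1]
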